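/- arXiv:2312.01750 — 3 statements merged into one kernel-verified Lean document; each statement's English description precedes it below -/
import Mathlib

section
/- Let A ⊆ B be commutative domains and let δ be an exponential map on B over A. Then the ring of δ-invariants B^δ is factorially closed in B: for all nonzero x, y ∈ B, if xy ∈ B^δ then x ∈ B^δ and y ∈ B^δ. In particular, B^δ is algebraically closed in B. -/
open Polynomial

/-- An *exponential map* on a commutative ring `B` over `A`: an `A`-algebra homomorphism
`δ : B → B[t]` such that evaluation at `t = 0` is the identity and
`δ_s ∘ δ_t = δ_{s+t}` (the co-associativity / iterativity condition). -/
structure ExpMap (A : Type*) (B : Type*) [CommRing A] [CommRing B] [Algebra A B] where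
  toFun : B →ₐ[A] Polynomial B
  eval_zero : ∀ b : B, (toFun b).eval 0 = b
  coassoc : ∀ b : B,
    (toFun b).map (toFun.toRingHom) =
      (toFun b).eval₂ (Polynomial.C.comp Polynomial.C)
        (Polynomial.C Polynomial.X + Polynomial.X)

namespace ExpMap

variable {A B : Type*} [CommRing A] [CommRing B] [Algebra A B]

/-- The ring of invariants `B^δ = {x ∈ B | δ(x) = x}`. -/
def invariants (δ : ExpMap A B) : Subalgebra A B where
  carrier := {x : B | δ.toFun x = Polynomial.C x}
  mul_mem' := by
    intro a b ha hb
    simp only [Set.mem_setOf_eq] at *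
    rw [map_mul, ha, hb, ← map_mul]
  add_mem' := by
    intro a b ha hb
    simp only [Set.mem_setOf_eq] at *
    rw [map_add, ha, hb, ← map_add]
  algebraMap_mem' := by
    intro r
    simp only [Set.mem_setOf_eq, AlgHom.commutes, Polynomial.algebraMap_apply]

/-- `δ` is non-trivial if `B^δ ≠ B`. -/
def IsNontrivial (δ : ExpMap A B) : Prop := δ.invariants ≠ ⊤

/-- The iterative higher derivations attached to `δ`: `δ(x) = Σ (D i x) tⁱ`. -/
noncomputable def D (δ : ExpMap A B) (i : ℕ) (x : B) : B := (δ.toFun x).coeff i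

/-- A *local slice* of `δ`: an element whose image under `δ` has minimal positive
`t`-degree. -/
def IsLocalSlice (δ : ExpMap A B) (x : B) : Prop :=
  0 < (δ.toFun x).natDegree ∧
    ∀ y : B, 0 < (δ.toFun y).natDegree → (δ.toFun x).natDegree ≤ (δ.toFun y).natDegree

/-- A *slice* of `δ`: a local slice `x` such that `D n x` is a unit, where
`n = deg_t δ(x)`. -/
def IsSlice (δ : ExpMap A B) (x : B) : Prop :=
  δ.IsLocalSlice x ∧ IsUnit ((δ.toFun x).coeff (δ.toFun x).natDegree)

end ExpMap

/-- `X : Fin n → B` is a *coordinate system* of `B` over `A`, i.e. `B = A[X₁, …, Xₙ]`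
is a polynomial ring in the `n` variables `X₁, …, Xₙ` over `A`. -/
def IsCoordSystem (A : Type*) {B : Type*} [CommRing A] [CommRing B] [Algebra A B]
    {n : ℕ} (X : Fin n → B) : Prop :=
  Function.Bijective (MvPolynomial.aeval (R := A) X)

namespace ExpMap

variable {A B : Type*} [CommRing A] [CommRing B] [Algebra A B]

/-- The *rank* of an exponential map `δ` on `B = A^[n]`: the least `r` such that some
coordinate system `{X₁, …, Xₙ}` satisfies `A[X₁, …, X_{n-r}] ⊆ B^δ`. -/
noncomputable def rank (δ : ExpMap A B) (n : ℕ) : ℕ :=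
  sInf {r : ℕ | ∃ X : Fin n → B, IsCoordSystem A X ∧
    Algebra.adjoin A (X '' {i : Fin n | (i : ℕ) < n - r}) ≤ δ.invariants}

/-- `X ∈ Γ_δ(B)`: a coordinate system with `A[X₁, …, X_{n-r}] ⊆ B^δ` where `r = rank δ`. -/
def InGamma (δ : ExpMap A B) {n : ℕ} (X : Fin n → B) : Prop :=
  IsCoordSystem A X ∧
    Algebra.adjoin A (X '' {i : Fin n | (i : ℕ) < n - δ.rank n}) ≤ δ.invariants

/-- `δ` is *rigid* if the subring `A[X₁, …, X_{n-r}]` does not depend on the choice of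
`{X₁, …, Xₙ} ∈ Γ_δ(B)`. -/
def IsRigid (δ : ExpMap A B) (n : ℕ) : Prop :=
  ∀ X X' : Fin n → B, δ.InGamma X → δ.InGamma X' →
    Algebra.adjoin A (X '' {i : Fin n | (i : ℕ) < n - δ.rank n}) =
      Algebra.adjoin A (X' '' {i : Fin n | (i : ℕ) < n - δ.rank n})

/-- `δ` is *triangular with respect to the coordinate system `X`* over `A`. -/
def IsTriangularWith (δ : ExpMap A B) {n : ℕ} (X : Fin n → B) : Prop :=
  IsCoordSystem A X ∧
    (∀ i : Fin n, ∀ j : ℕ, 0 < j →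
      (δ.toFun (X i)).coeff j ∈ Algebra.adjoin A (X '' {l : Fin n | (l : ℕ) < (i : ℕ)})) ∧
    (∀ i : Fin n, δ.toFun (X i) ≠ Polynomial.C (X i) →
      (∀ l : Fin n, (l : ℕ) < (i : ℕ) → δ.toFun (X l) = Polynomial.C (X l)) →
      δ.IsLocalSlice (X i))

/-- `δ` is *triangular* over `A` (in `n` variables). -/
def IsTriangular (δ : ExpMap A B) (n : ℕ) : Prop :=
  ∃ X : Fin n → B, δ.IsTriangularWith X

/-- `δ` is *triangular over the subring `R`* of `B` (with `B = R^[m]`). -/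
def IsTriangularOver (δ : ExpMap A B) (R : Subalgebra A B) (m : ℕ) : Prop :=
  ∃ X : Fin m → B,
    Function.Bijective (MvPolynomial.aeval (R := ↥R) X) ∧
    (∀ i : Fin m, ∀ j : ℕ, 0 < j →
      (δ.toFun (X i)).coeff j ∈ Algebra.adjoin (↥R) (X '' {l : Fin m | (l : ℕ) < (i : ℕ)})) ∧
    (∀ i : Fin m, δ.toFun (X i) ≠ Polynomial.C (X i) →
      (∀ l : Fin m, (l : ℕ) < (i : ℕ) → δ.toFun (X l) = Polynomial.C (X l)) →
      δ.IsLocalSlice (X i))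

end ExpMap

/-! An element `x` is `δ`-invariant exactly when `δ(x) ∈ B[t]` has `t`-degree zero, because
`δ(x)` evaluates to `x` at `t = 0`. Since `δ` is a ring homomorphism into the domain `B[t]`,
`t`-degrees add along products, so a product of degree zero has factors of degree zero; and
`δ` carries an element algebraic over `B^δ` to an element of `B[t]` algebraic over `B`, which
must be a constant. -/

theorem Polynomial.natDegree_eq_zero_of_isAlgebraic {R : Type*} [CommRing R] [NoZeroDivisors R]
    {f : R[X]} (hf : IsAlgebraic R f) : f.natDegree = 0 := by
  by_contra hdeg
  have hf0 : f ≠ 0 := fun h => hdeg (by rw [h, natDegree_zero])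
  exact f.transcendental hdeg (mem_nonZeroDivisors_of_ne_zero (leadingCoeff_ne_zero.mpr hf0)) hf

namespace ExpMap

variable {A B : Type*} [CommRing A] [CommRing B] [Algebra A B] (δ : ExpMap A B)

theorem toFun_ne_zero {x : B} (hx : x ≠ 0) : δ.toFun x ≠ 0 := fun h =>
  hx (by rw [← δ.eval_zero x, h, Polynomial.eval_zero])

theorem mem_invariants_iff_natDegree_eq_zero {x : B} :
    x ∈ δ.invariants ↔ (δ.toFun x).natDegree = 0 := by
  refine ⟨fun hx => by rw [show δ.toFun x = C x from hx, natDegree_C], fun hdeg => ?_⟩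
  show δ.toFun x = C x
  rw [eq_C_of_natDegree_eq_zero hdeg, coeff_zero_eq_eval_zero, δ.eval_zero]

def toInvariantsAlgHom : B →ₐ[δ.invariants] B[X] where
  __ := δ.toFun.toRingHom
  -- `B^δ` acts on `B[t]` through constants, so this is the invariance `δ r = C r`.
  commutes' r := r.2

theorem mem_invariants_of_mul_mem [NoZeroDivisors B] {x y : B} (hx : x ≠ 0) (hy : y ≠ 0)
    (hxy : x * y ∈ δ.invariants) : x ∈ δ.invariants ∧ y ∈ δ.invariants := by
  have hdeg : (δ.toFun x).natDegree + (δ.toFun y).natDegree = 0 := by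
    rw [← natDegree_mul (δ.toFun_ne_zero hx) (δ.toFun_ne_zero hy), ← map_mul]
    exact δ.mem_invariants_iff_natDegree_eq_zero.mp hxy
  exact ⟨δ.mem_invariants_iff_natDegree_eq_zero.mpr (by omega),
    δ.mem_invariants_iff_natDegree_eq_zero.mpr (by omega)⟩

theorem mem_invariants_of_isAlgebraic [NoZeroDivisors B] {b : B}
    (hb : IsAlgebraic δ.invariants b) : b ∈ δ.invariants := by
  have hδb : IsAlgebraic B (δ.toFun b) :=
    (hb.algHom δ.toInvariantsAlgHom).extendScalars Subtype.val_injective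
  exact δ.mem_invariants_iff_natDegree_eq_zero.mpr (natDegree_eq_zero_of_isAlgebraic hδb)

end ExpMap

theorem invariants_factorially_closed_general
    {A B : Type*} [CommRing A] [CommRing B] [IsDomain B] [Algebra A B]
    (δ : ExpMap A B) :
    (∀ x y : B, x ≠ 0 → y ≠ 0 → x * y ∈ δ.invariants →
      x ∈ δ.invariants ∧ y ∈ δ.invariants) ∧
    (∀ b : B, IsAlgebraic (↥δ.invariants) b → b ∈ δ.invariants) :=
  ⟨fun _ _ hx hy hxy => δ.mem_invariants_of_mul_mem hx hy hxy,
    fun _ hb => δ.mem_invariants_of_isAlgebraic hb⟩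

/-- Let `A ⊆ B` be domains and `δ` an exponential map on `B` over `A`.
Then `B^δ` is factorially closed in `B`; in particular it is algebraically closed in `B`. -/
theorem invariants_factorially_closed
    {A B : Type*} [CommRing A] [IsDomain A] [CommRing B] [IsDomain B] [Algebra A B]
    (hAB : Function.Injective (algebraMap A B)) (δ : ExpMap A B) :
    (∀ x y : B, x ≠ 0 → y ≠ 0 → x * y ∈ δ.invariants →
      x ∈ δ.invariants ∧ y ∈ δ.invariants) ∧
    (∀ b : B, IsAlgebraic (↥δ.invariants) b → b ∈ δ.invariants) :=
  invariants_factorially_closed_general δ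
end

section
/- (Slice Theorem) Let k be a field, B a domain containing k, and δ a non-trivial exponential map on B over k. If x ∈ B is a slice of δ, then B = B^δ[x] and x is transcendental over B^δ, i.e., B is a polynomial ring in one variable over B^δ. -/
open Polynomial

/-!
Write `δ(b) = Σ Dᵢ(b) tⁱ`. Iterativity says that `δ(Dⱼ b)` is the `j`-th Hasse derivative of
`δ(b)`, so `deg δ(Dⱼ b) ≤ deg δ(b) - j`, with equality when `(deg δ(b)).choose j` is nonzero in
`B`, and the leading coefficient of every `δ(b)` is invariant. Minimality of `n = deg δ(x)` then
forces `n ∣ deg δ(b)` for all `b`, so subtracting a suitable invariant multiple of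
`x ^ (deg δ(b) / n)` (the leading coefficient of `δ(x)` being a unit) lowers `deg δ(b)`; by
induction `B = B^δ[x]`. Finally `δ(P(x)) = P(δ(x))` for `P` with invariant coefficients, and
`δ(x)` is a nonconstant polynomial over a domain, so `x` is transcendental over `B^δ`.
-/

open Polynomial

namespace Polynomial

variable {R : Type*}

theorem hasseDeriv_map [Semiring R] {S : Type*} [Semiring S] (f : R →+* S) (k : ℕ)
    (p : R[X]) : hasseDeriv k (p.map f) = (hasseDeriv k p).map f := by
  ext n
  simp only [hasseDeriv_coeff, coeff_map, map_mul, map_natCast]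

theorem natDegree_hasseDeriv_of_choose_ne_zero [Semiring R] [NoZeroDivisors R] {p : R[X]}
    {k : ℕ} (hk : k ≤ p.natDegree) (hchoose : (p.natDegree.choose k : R) ≠ 0) :
    (hasseDeriv k p).natDegree = p.natDegree - k := by
  rcases eq_or_ne p 0 with rfl | hp
  · simp
  refine (natDegree_hasseDeriv_le p k).antisymm (le_natDegree_of_ne_zero ?_)
  rw [hasseDeriv_coeff, Nat.sub_add_cancel hk]
  exact mul_ne_zero hchoose (leadingCoeff_ne_zero.mpr hp)

end Polynomial

/- Modulo `X ^ n` we have `(X + 1) ^ n = 1`, hence `(X + 1) ^ m = (X + 1) ^ (m % n)`;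
comparing the coefficients of `X ^ (m % n)` gives `0 = 1` unless `m % n = 0`. -/
theorem dvd_of_choose_cast_eq_zero {R : Type*} [CommRing R] [Nontrivial R] {n m : ℕ}
    (hn : 0 < n) (hnm : n ≤ m) (hn_choose : ∀ i, 0 < i → i < n → (n.choose i : R) = 0)
    (hm_choose : ∀ j, 0 < j → j < m → (m.choose j : R) = 0) : n ∣ m := by
  have hXn : (X : R[X]) ^ n ∣ (X + 1) ^ n - 1 := by
    refine X_pow_dvd_iff.mpr fun d hd => ?_
    rw [coeff_sub, coeff_X_add_one_pow, coeff_one]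
    rcases Nat.eq_zero_or_pos d with rfl | hd0
    · simp
    · rw [hn_choose d hd0 hd, if_neg hd0.ne', sub_zero]
  have hXm : (X : R[X]) ^ n ∣ (X + 1) ^ m - (X + 1) ^ (m % n) := by
    have h := hXn.trans (sub_dvd_pow_sub_pow ((X + 1) ^ n) 1 (m / n))
    rw [one_pow, ← pow_mul] at h
    refine (h.mul_right ((X + 1) ^ (m % n))).trans (dvd_of_eq ?_)
    rw [sub_mul, one_mul, ← pow_add, Nat.div_add_mod]
  by_contra hndvd
  have hr : 0 < m % n := Nat.pos_of_ne_zero (mt Nat.dvd_of_mod_eq_zero hndvd)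
  have hrn : m % n < n := Nat.mod_lt m hn
  have hcoeff := X_pow_dvd_iff.mp hXm (m % n) hrn
  rw [coeff_sub, coeff_X_add_one_pow, coeff_X_add_one_pow, Nat.choose_self,
    hm_choose _ hr (by omega)] at hcoeff
  simp at hcoeff

namespace ExpMap

variable {A B : Type*} [CommRing A] [CommRing B] [Algebra A B] (δ : ExpMap A B)

theorem D_zero (b : B) : δ.D 0 b = b := by
  rw [D, coeff_zero_eq_eval_zero, δ.eval_zero]

/- The coefficient of `tʲ` in `δ_s (δ_t b) = δ(b)(s + t)` is, by Taylor's formula, the `j`-th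
Hasse derivative of `δ(b)` at `s`. -/
theorem toFun_D (j : ℕ) (b : B) : δ.toFun (δ.D j b) = hasseDeriv j (δ.toFun b) := by
  have h := congrArg (coeff · j) (δ.coassoc b)
  simp only [coeff_map] at h
  refine h.trans ?_
  rw [← eval₂_map, add_comm, ← comp, ← taylor_apply, taylor_coeff, hasseDeriv_map, eval_map,
    eval₂_C_X]

theorem mem_invariants_of_natDegree_eq_zero {b : B} (hb : (δ.toFun b).natDegree = 0) :
    b ∈ δ.invariants := by
  change δ.toFun b = C b
  rw [eq_C_of_natDegree_eq_zero hb]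
  exact congrArg C (δ.D_zero b)

theorem leadingCoeff_toFun_mem_invariants (b : B) : (δ.toFun b).leadingCoeff ∈ δ.invariants :=
  (δ.toFun_D _ b).trans (hasseDeriv_natDegree_eq_C _)

theorem inv_mem_invariants {u : Bˣ} (hu : (u : B) ∈ δ.invariants) :
    ((u⁻¹ : Bˣ) : B) ∈ δ.invariants := by
  change δ.toFun _ = C _
  have hu' : δ.toFun u * δ.toFun ↑u⁻¹ = 1 := by rw [← map_mul, u.mul_inv, map_one]
  rw [hu] at hu'
  calc δ.toFun ↑u⁻¹ = C ↑u⁻¹ * (C ↑u * δ.toFun ↑u⁻¹) := by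
        rw [← mul_assoc, ← map_mul, u.inv_mul, map_one, one_mul]
    _ = C ↑u⁻¹ := by rw [hu', mul_one]

theorem toFun_aeval (x : B) (P : δ.invariants[X]) :
    δ.toFun (aeval x P) = (P.map (algebraMap δ.invariants B)).comp (δ.toFun x) := by
  have hinv : (δ.toFun : B →+* B[X]).comp (algebraMap δ.invariants B) =
      C.comp (algebraMap δ.invariants B) := RingHom.ext fun a => a.2
  have h := hom_eval₂ P (algebraMap δ.invariants B) (δ.toFun : B →+* B[X]) x
  rwa [hinv, ← eval₂_map] at h

variable {δ} in
theorem IsLocalSlice.notMem_invariants {x : B} (hx : δ.IsLocalSlice x) :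
    x ∉ δ.invariants := fun hinv =>
  hx.1.ne' <| by rw [show δ.toFun x = C x from hinv, natDegree_C]

section Domain

variable [IsDomain B]

theorem transcendental_of_notMem_invariants {x : B} (hx : x ∉ δ.invariants) :
    Transcendental δ.invariants x := by
  refine transcendental_iff_injective.mpr <| (injective_iff_map_eq_zero _).mpr fun P hP => ?_
  have hcomp := congrArg δ.toFun hP
  rw [toFun_aeval, map_zero, comp_eq_zero_iff] at hcomp
  rcases hcomp with hP0 | ⟨-, hconst⟩
  · exact (Polynomial.map_eq_zero_iff Subtype.val_injective).mp hP0
  · exact absurd (hconst.trans (congrArg C (δ.D_zero x))) hx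

theorem natDegree_toFun_D_of_choose_ne_zero {b : B} {j : ℕ}
    (hj : j ≤ (δ.toFun b).natDegree)
    (hchoose : ((δ.toFun b).natDegree.choose j : B) ≠ 0) :
    (δ.toFun (δ.D j b)).natDegree = (δ.toFun b).natDegree - j := by
  rw [toFun_D]
  exact natDegree_hasseDeriv_of_choose_ne_zero hj hchoose

variable {δ}

theorem IsLocalSlice.choose_cast_eq_zero {x : B} (hx : δ.IsLocalSlice x) {i : ℕ} (hi : 0 < i)
    (hin : i < (δ.toFun x).natDegree) : ((δ.toFun x).natDegree.choose i : B) = 0 := by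
  by_contra hchoose
  have hdeg := δ.natDegree_toFun_D_of_choose_ne_zero hin.le hchoose
  have := hx.2 (δ.D i x) (by omega)
  omega

/- If some `m.choose j` with `0 < j < m` survives in `B`, then `m - j` and `j` are themselves
degrees (of `δ (D j b)` and `δ (D (m - j) b)`) and induction applies; otherwise
`(1 + t) ^ m = 1 + t ^ m` in `B[t]`, as is `(1 + t) ^ n = 1 + t ^ n`. -/
theorem IsLocalSlice.natDegree_dvd {x : B} (hx : δ.IsLocalSlice x) (b : B) :
    (δ.toFun x).natDegree ∣ (δ.toFun b).natDegree := by
  induction hm : (δ.toFun b).natDegree using Nat.strong_induction_on generalizing b with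
  | _ m ih =>
    rcases Nat.eq_zero_or_pos m with rfl | hm0
    · exact dvd_zero _
    by_cases hchoose : ∃ j, 0 < j ∧ j < m ∧ (m.choose j : B) ≠ 0
    · obtain ⟨j, hj0, hjm, hj⟩ := hchoose
      have hj' : (m.choose (m - j) : B) ≠ 0 := by rwa [Nat.choose_symm hjm.le]
      have hdj := δ.natDegree_toFun_D_of_choose_ne_zero (b := b) (j := j) (by omega) (hm ▸ hj)
      have hdmj := δ.natDegree_toFun_D_of_choose_ne_zero (b := b) (j := m - j) (by omega)
        (hm ▸ hj')
      rw [hm] at hdj hdmj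
      have h1 := ih (m - j) (by omega) _ hdj
      have h2 := ih (m - (m - j)) (by omega) _ hdmj
      rw [Nat.sub_sub_self hjm.le] at h2
      rw [← Nat.sub_add_cancel hjm.le]
      exact dvd_add h1 h2
    · push Not at hchoose
      exact dvd_of_choose_cast_eq_zero hx.1 (hm ▸ hx.2 b (hm ▸ hm0))
        (fun i hi hin => hx.choose_cast_eq_zero hi hin) hchoose

theorem IsSlice.exists_natDegree_sub_lt {x : B} (hx : δ.IsSlice x) {b : B}
    (hb : 0 < (δ.toFun b).natDegree) :
    ∃ c ∈ δ.invariants, ∃ q : ℕ,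
      (δ.toFun (b - c * x ^ q)).natDegree < (δ.toFun b).natDegree := by
  obtain ⟨q, hq⟩ := hx.1.natDegree_dvd b
  obtain ⟨u, hu⟩ := hx.2
  have hbne : δ.toFun b ≠ 0 := ne_zero_of_natDegree_gt hb
  have hxne : δ.toFun x ≠ 0 := ne_zero_of_natDegree_gt hx.1.1
  replace hu : (δ.toFun x).leadingCoeff = u := hu.symm
  set c := (δ.toFun b).leadingCoeff * ↑u⁻¹ ^ q with hc_def
  have hc : c ∈ δ.invariants := Subalgebra.mul_mem _ (δ.leadingCoeff_toFun_mem_invariants b)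
    (Subalgebra.pow_mem _ (δ.inv_mem_invariants (hu ▸ δ.leadingCoeff_toFun_mem_invariants x)) q)
  have hc0 : c ≠ 0 := mul_ne_zero (leadingCoeff_ne_zero.mpr hbne) (pow_ne_zero _ (Units.ne_zero _))
  have hδc : δ.toFun (c * x ^ q) = C c * δ.toFun x ^ q := by
    rw [map_mul, map_pow, show δ.toFun c = C c from hc]
  have hne : C c * δ.toFun x ^ q ≠ 0 := mul_ne_zero (C_ne_zero.mpr hc0) (pow_ne_zero _ hxne)
  have hdeg : (δ.toFun b).degree = (C c * δ.toFun x ^ q).degree := by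
    rw [degree_eq_natDegree hbne, degree_eq_natDegree hne, natDegree_C_mul hc0,
      natDegree_pow, hq, mul_comm]
  have hlc : (δ.toFun b).leadingCoeff = (C c * δ.toFun x ^ q).leadingCoeff := by
    rw [leadingCoeff_mul, leadingCoeff_C, leadingCoeff_pow, hc_def, hu, mul_assoc, ← mul_pow,
      u.inv_mul, one_pow, mul_one]
  refine ⟨c, hc, q, ?_⟩
  rw [map_sub, hδc]
  by_cases hsub : δ.toFun b - C c * δ.toFun x ^ q = 0
  · rwa [hsub, natDegree_zero]
  · exact natDegree_lt_natDegree hsub (degree_sub_lt_left hdeg hbne hlc)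

theorem IsSlice.adjoin_eq_top {x : B} (hx : δ.IsSlice x) :
    Algebra.adjoin δ.invariants {x} = ⊤ := by
  suffices ∀ b, b ∈ Algebra.adjoin δ.invariants {x} from eq_top_iff.mpr fun b _ => this b
  intro b
  induction hm : (δ.toFun b).natDegree using Nat.strong_induction_on generalizing b with
  | _ m ih =>
    rcases Nat.eq_zero_or_pos m with rfl | hm0
    · exact Subalgebra.algebraMap_mem _ (⟨b, δ.mem_invariants_of_natDegree_eq_zero hm⟩ :
        δ.invariants)
    obtain ⟨c, hc, q, hlt⟩ := hx.exists_natDegree_sub_lt (hm ▸ hm0)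
    have hsub := ih _ (hm ▸ hlt) (b - c * x ^ q) rfl
    have hcxq : c * x ^ q ∈ Algebra.adjoin δ.invariants {x} :=
      Subalgebra.mul_mem _ (Subalgebra.algebraMap_mem _ (⟨c, hc⟩ : δ.invariants))
        (Subalgebra.pow_mem _ (Algebra.self_mem_adjoin_singleton _ x) q)
    have hsum := Subalgebra.add_mem _ hsub hcxq
    rwa [sub_add_cancel] at hsum

end Domain

end ExpMap

theorem slice_theorem_general
    {k B : Type*} [Field k] [CommRing B] [IsDomain B] [Algebra k B]
    (δ : ExpMap k B) (x : B) (hx : δ.IsSlice x) :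
    Algebra.adjoin (↥δ.invariants) ({x} : Set B) = ⊤ ∧
      Transcendental (↥δ.invariants) x :=
  ⟨hx.adjoin_eq_top, δ.transcendental_of_notMem_invariants hx.1.notMem_invariants⟩

/-- **Slice Theorem.** Let `k` be a field, `B` a domain containing `k`, and
`δ` a non-trivial exponential map on `B` over `k`. If `x` is a slice of `δ`, then
`B = B^δ[x]` with `x` transcendental over `B^δ`, i.e. `B = (B^δ)^[1]`. -/
theorem slice_theorem
    {k B : Type*} [Field k] [CommRing B] [IsDomain B] [Algebra k B]
    (δ : ExpMap k B) (hδ : δ.IsNontrivial) (x : B) (hx : δ.IsSlice x) :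
    Algebra.adjoin (↥δ.invariants) ({x} : Set B) = ⊤ ∧
      Transcendental (↥δ.invariants) x :=
  slice_theorem_general δ x hx
end

section
/- Let A be a domain with fraction field K and let δ be an exponential map on A^[n] over A. Let δ_K be the induced exponential map on K^[n] obtained by localizing at S = A∖{0}. If rank(δ) = rank(δ_K) and δ_K is rigid, then δ is rigid. -/
open Polynomial

/-! Localizing at `A ∖ {0}` turns a coordinate system `x` of `B = A^[n]` into one of
`B' = K^[n]`, and an element `b ∈ B` lies in `A[x_S]` exactly when its image lies in `K[x_S]`
(both are the polynomials supported on `S`, and a polynomial over `A` is supported on `S` iff its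
image over `K` is). Since the ranks agree, `Γ_δ(B)` is mapped into `Γ_{δ_K}(B')`, so rigidity of
`δ_K` pulls back to `δ`. -/

namespace MvPolynomial

variable {σ R S : Type*}

theorem aeval_mem_adjoin_image_iff [CommSemiring R] [CommSemiring S] [Algebra R S]
    {x : σ → S} (hx : Function.Injective (aeval (R := R) x)) {s : Set σ}
    {p : MvPolynomial σ R} :
    aeval x p ∈ Algebra.adjoin R (x '' s) ↔ p ∈ supported R s := by
  have himage : x '' s = aeval (R := R) x '' (X '' s) := by rw [Set.image_image]; simp
  rw [himage, ← AlgHom.map_adjoin, ← supported_eq_adjoin_X, ← SetLike.mem_coe,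
    Subalgebra.coe_map, hx.mem_set_image, SetLike.mem_coe]

theorem map_mem_supported_iff [CommRing R] [CommRing S] {f : R →+* S}
    (hf : Function.Injective f) {s : Set σ} {p : MvPolynomial σ R} :
    map f p ∈ supported S s ↔ p ∈ supported R s := by
  simp only [mem_supported, vars_map_of_injective p hf]

end MvPolynomial

section Localization

variable {A K B B' : Type*} [CommRing A] [CommRing K] [Algebra A K]
  [CommRing B] [Algebra A B] [CommRing B'] [Algebra K B'] [Algebra A B'] [Algebra B B']
  [IsScalarTower A K B'] [IsScalarTower A B B']

theorem aeval_algebraMap_comp_map {σ : Type*} (x : σ → B) (p : MvPolynomial σ A) :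
    MvPolynomial.aeval (algebraMap B B' ∘ x) (MvPolynomial.map (algebraMap A K) p) =
      algebraMap B B' (MvPolynomial.aeval x p) := by
  rw [MvPolynomial.aeval_map_algebraMap, ← IsScalarTower.coe_toAlgHom' A B B',
    MvPolynomial.comp_aeval_apply]
  rfl

attribute [local instance] MvPolynomial.algebraMvPolynomial in
theorem IsCoordSystem.algebraMap_comp (M : Submonoid A) [IsLocalization M K]
    [IsLocalization (Algebra.algebraMapSubmonoid B M) B'] {n : ℕ} {x : Fin n → B}
    (hx : IsCoordSystem A x) : IsCoordSystem K (algebraMap B B' ∘ x) := by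
  -- `K[x]` and `B'` are both localizations of `A[x] ≅ B` at the image of `M`.
  let e := AlgEquiv.ofBijective (MvPolynomial.aeval (R := A) x) hx
  have hM : (M.map (MvPolynomial.C (σ := Fin n))).map e.toRingEquiv.toMonoidHom =
      Algebra.algebraMapSubmonoid B M := by
    have hC (a : A) : e (MvPolynomial.C a) = algebraMap A B a := MvPolynomial.aeval_C x a
    ext y
    simp [Algebra.algebraMapSubmonoid, Submonoid.mem_map, hC]
  let f := IsLocalization.ringEquivOfRingEquiv (MvPolynomial (Fin n) K) B' e.toRingEquiv hM
  have hf : (MvPolynomial.aeval (R := K) (algebraMap B B' ∘ x)).toRingHom = f := by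
    refine IsLocalization.ringHom_ext (M.map (MvPolynomial.C (σ := Fin n)))
      (RingHom.ext fun p => ?_)
    change MvPolynomial.aeval _ (algebraMap _ _ p) = f (algebraMap _ _ p)
    rw [IsLocalization.ringEquivOfRingEquiv_eq, MvPolynomial.algebraMap_def,
      aeval_algebraMap_comp_map]
    rfl
  change Function.Bijective (MvPolynomial.aeval (R := K) (algebraMap B B' ∘ x)).toRingHom
  rw [hf]
  exact f.bijective

theorem IsCoordSystem.algebraMap_mem_adjoin_image_iff (M : Submonoid A) [IsLocalization M K]
    [IsLocalization (Algebra.algebraMapSubmonoid B M) B'] (hK : Function.Injective (algebraMap A K))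
    {n : ℕ} {x : Fin n → B} (hx : IsCoordSystem A x) (s : Set (Fin n)) (b : B) :
    algebraMap B B' b ∈ Algebra.adjoin K ((algebraMap B B' ∘ x) '' s) ↔
      b ∈ Algebra.adjoin A (x '' s) := by
  obtain ⟨p, rfl⟩ := hx.surjective b
  rw [← aeval_algebraMap_comp_map (K := K),
    MvPolynomial.aeval_mem_adjoin_image_iff (hx.algebraMap_comp M).injective,
    MvPolynomial.map_mem_supported_iff hK, MvPolynomial.aeval_mem_adjoin_image_iff hx.injective]

end Localization

namespace ExpMap

variable {A K B B' : Type*} [CommRing A] [CommRing K] [CommRing B] [Algebra A B]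
  [CommRing B'] [Algebra K B']

theorem map_mem_invariants {δ : ExpMap A B} {δ' : ExpMap K B'} (f : B →+* B')
    (hf : ∀ b, δ'.toFun (f b) = (δ.toFun b).map f) {b : B} (hb : b ∈ δ.invariants) :
    f b ∈ δ'.invariants := by
  change δ'.toFun (f b) = C (f b)
  rw [hf, hb, Polynomial.map_C]

theorem InGamma.algebraMap_comp [Algebra A K] [Algebra A B'] [Algebra B B']
    [IsScalarTower A K B'] [IsScalarTower A B B'] (M : Submonoid A) [IsLocalization M K]
    [IsLocalization (Algebra.algebraMapSubmonoid B M) B'] {δ : ExpMap A B} {δ' : ExpMap K B'}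
    (hδ : ∀ b, δ'.toFun (algebraMap B B' b) = (δ.toFun b).map (algebraMap B B'))
    {n : ℕ} (hrank : δ.rank n = δ'.rank n) {x : Fin n → B} (hx : δ.InGamma x) :
    δ'.InGamma (algebraMap B B' ∘ x) := by
  refine ⟨hx.1.algebraMap_comp M, Algebra.adjoin_le ?_⟩
  rintro _ ⟨i, hi, rfl⟩
  rw [← hrank] at hi
  exact map_mem_invariants _ hδ (hx.2 (Algebra.subset_adjoin ⟨i, hi, rfl⟩))

end ExpMap

theorem rigid_of_rigid_over_fractions_general
    {A K B B' : Type*} [CommRing A] [Field K] [Algebra A K]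
    [IsFractionRing A K] [CommRing B] [Algebra A B]
    [CommRing B'] [Algebra K B'] [Algebra A B'] [Algebra B B']
    [IsScalarTower A K B'] [IsScalarTower A B B']
    [IsLocalization (Algebra.algebraMapSubmonoid B (nonZeroDivisors A)) B']
    {n : ℕ}
    (δ : ExpMap A B) (δK : ExpMap K B')
    (hcompat : ∀ b : B,
      δK.toFun (algebraMap B B' b) = (δ.toFun b).map (algebraMap B B'))
    (hrank : δ.rank n = δK.rank n) (hrigid : δK.IsRigid n) :
    δ.IsRigid n := by
  intro x x' hx hx'
  have hK := IsFractionRing.injective A K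
  have hrigidK := hrigid _ _ (hx.algebraMap_comp (nonZeroDivisors A) hcompat hrank)
    (hx'.algebraMap_comp (nonZeroDivisors A) hcompat hrank)
  rw [← hrank] at hrigidK
  ext b
  rw [← hx.1.algebraMap_mem_adjoin_image_iff (B' := B') (nonZeroDivisors A) hK, hrigidK,
    hx'.1.algebraMap_mem_adjoin_image_iff (B' := B') (nonZeroDivisors A) hK]

/-- Let `A` be a domain with fraction field `K`, `δ ∈ EXP_A(A^[n])`, and
`δ_K ∈ EXP(K^[n])` the induced exponential map obtained by localizing at `S = A∖{0}`.
If `rank δ = rank δ_K` and `δ_K` is rigid, then `δ` is rigid. -/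
theorem rigid_of_rigid_over_fractions
    {A K B B' : Type*} [CommRing A] [IsDomain A] [Field K] [Algebra A K]
    [IsFractionRing A K] [CommRing B] [IsDomain B] [Algebra A B]
    [CommRing B'] [IsDomain B'] [Algebra K B'] [Algebra A B'] [Algebra B B']
    [IsScalarTower A K B'] [IsScalarTower A B B']
    [IsLocalization (Algebra.algebraMapSubmonoid B (nonZeroDivisors A)) B']
    (hAB : Function.Injective (algebraMap A B))
    {n : ℕ} (hB : ∃ X : Fin n → B, IsCoordSystem A X)
    (δ : ExpMap A B) (δK : ExpMap K B')
    (hcompat : ∀ b : B,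
      δK.toFun (algebraMap B B' b) = (δ.toFun b).map (algebraMap B B'))
    (hrank : δ.rank n = δK.rank n) (hrigid : δK.IsRigid n) :
    δ.IsRigid n :=
  rigid_of_rigid_over_fractions_general δ δK hcompat hrank hrigid
end
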